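/- Let A = {(x, y, z) ∈ ℝ³ : z ≥ x² + y⁴} and B = {(x, y, 0) : (x, y) ∈ ℝ²}. Let {(x_k, y_k)} ⊆ ℝ² be defined by (x_{k+1}, y_{k+1}, 0) = P_B(P_A((x_k, y_k, 0))) for k = 0, 1, 2, …. If y_0 = 0 and x_0 ≠ 0, then lim_{k→∞} 2 k^{1/2} ‖(x_k, y_k)‖ = 1; in particular ‖(x_k, y_k)‖ = Θ(k^{−1/2}) as k → ∞. -/

import Mathlib

/-!
From `(t, 0, 0)` the nearest point of the paraboloid `A` is `(a, 0, a²)`, where `a` is the critical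
point of `s ↦ (s - t)² + s⁴`, i.e. `a + 2a³ = t`; projecting onto `B` then drops the third
coordinate. Hence `y_k = 0` for all `k`, and `u_k = |x_k|` satisfies `u_k = u_{k+1} + 2u_{k+1}³`,
so it decreases to `0`. Then `u_{k+1}⁻² - u_k⁻² = 4(1 + u_{k+1}²)/(1 + 2u_{k+1}²)² → 4`, and by
Stolz–Cesàro `k⁻¹ u_k⁻² → 4`, that is `2√k u_k → 1`.
-/

open Filter

/-- `u` is the metric projection of `p` onto `S`. -/
def IsMetricProj {E : Type*} [NormedAddCommGroup E] (S : Set E) (p u : E) : Prop :=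
  u ∈ S ∧ ∀ s ∈ S, ‖u - p‖ ≤ ‖s - p‖

/-- The point (a, b, c) of Euclidean 3-space. -/
noncomputable def e3 (a b c : ℝ) : EuclideanSpace ℝ (Fin 3) :=
  (WithLp.equiv 2 (Fin 3 → ℝ)).symm ![a, b, c]

open Topology

@[simp] lemma e3_apply_zero (a b c : ℝ) : e3 a b c 0 = a := rfl
@[simp] lemma e3_apply_one (a b c : ℝ) : e3 a b c 1 = b := rfl
@[simp] lemma e3_apply_two (a b c : ℝ) : e3 a b c 2 = c := rfl

lemma norm_sub_sq_fin_three (p q : EuclideanSpace ℝ (Fin 3)) :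
    ‖p - q‖ ^ 2 = (p 0 - q 0) ^ 2 + (p 1 - q 1) ^ 2 + (p 2 - q 2) ^ 2 := by
  rw [EuclideanSpace.norm_sq_eq, Fin.sum_univ_three]
  simp [sq_abs]

namespace IsMetricProj

lemma sq_le {S : Set (EuclideanSpace ℝ (Fin 3))} {p u s : EuclideanSpace ℝ (Fin 3)}
    (h : IsMetricProj S p u) (hs : s ∈ S) :
    (u 0 - p 0) ^ 2 + (u 1 - p 1) ^ 2 + (u 2 - p 2) ^ 2 ≤
      (s 0 - p 0) ^ 2 + (s 1 - p 1) ^ 2 + (s 2 - p 2) ^ 2 := by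
  rw [← norm_sub_sq_fin_three, ← norm_sub_sq_fin_three]
  exact pow_le_pow_left₀ (norm_nonneg _) (h.2 s hs) 2

lemma apply_eq_of_plane {w v : EuclideanSpace ℝ (Fin 3)}
    (h : IsMetricProj {p : EuclideanSpace ℝ (Fin 3) | p 2 = 0} w v) :
    v 0 = w 0 ∧ v 1 = w 1 := by
  have hv : v 2 = 0 := h.1
  have hle := h.sq_le (s := e3 (w 0) (w 1) 0) rfl
  simp only [e3_apply_zero, e3_apply_one, e3_apply_two, hv] at hle
  constructor <;> nlinarith [sq_nonneg (v 0 - w 0), sq_nonneg (v 1 - w 1)]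

end IsMetricProj

lemma add_two_mul_pow_three_eq_of_forall_le {a t : ℝ}
    (h : ∀ s, (a - t) ^ 2 + a ^ 4 ≤ (s - t) ^ 2 + s ^ 4) : a + 2 * a ^ 3 = t := by
  have hderiv : HasDerivAt (fun s : ℝ => (s - t) ^ 2 + s ^ 4) (2 * (a - t) + 4 * a ^ 3) a := by
    refine ((((hasDerivAt_id a).sub_const t).pow 2).add ((hasDerivAt_id a).pow 4)).congr_deriv ?_
    simp only [id_eq]
    ring
  have := IsLocalMin.hasDerivAt_eq_zero (Eventually.of_forall h) hderiv
  linarith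

lemma IsMetricProj.apply_eq_of_paraboloid {t : ℝ} {w : EuclideanSpace ℝ (Fin 3)}
    (h : IsMetricProj {p : EuclideanSpace ℝ (Fin 3) | p 0 ^ 2 + p 1 ^ 4 ≤ p 2} (e3 t 0 0) w) :
    w 1 = 0 ∧ w 0 + 2 * w 0 ^ 3 = t := by
  have hw : w 0 ^ 2 + w 1 ^ 4 ≤ w 2 := h.1
  have hcmp : ∀ a b c : ℝ, a ^ 2 + b ^ 4 ≤ c →
      (w 0 - t) ^ 2 + w 1 ^ 2 + w 2 ^ 2 ≤ (a - t) ^ 2 + b ^ 2 + c ^ 2 := by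
    intro a b c habc
    simpa using h.sq_le (s := e3 a b c) habc
  have hboundary : w 2 = w 0 ^ 2 + w 1 ^ 4 := by
    have := hcmp (w 0) (w 1) _ le_rfl
    nlinarith [sq_nonneg (w 0), sq_nonneg (w 1 ^ 2)]
  have hw1 : w 1 = 0 := by
    have := hcmp (w 0) 0 (w 0 ^ 2) (by simp)
    nlinarith [sq_nonneg (w 1), sq_nonneg (w 1 ^ 2), sq_nonneg (w 0)]
  refine ⟨hw1, add_two_mul_pow_three_eq_of_forall_le fun s => ?_⟩
  have := hcmp s 0 (s ^ 2) (by simp)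
  rw [hboundary, hw1] at this
  nlinarith

lemma abs_add_two_mul_pow_three (t : ℝ) : |t + 2 * t ^ 3| = |t| + 2 * |t| ^ 3 := by
  rw [show t + 2 * t ^ 3 = t * (1 + 2 * t ^ 2) by ring, abs_mul,
    abs_of_pos (by positivity : (0 : ℝ) < 1 + 2 * t ^ 2), ← sq_abs]
  ring

lemma tendsto_div_natCast_of_tendsto_sub {v : ℕ → ℝ} {L : ℝ}
    (h : Tendsto (fun k => v (k + 1) - v k) atTop (𝓝 L)) :
    Tendsto (fun n : ℕ => v n / n) atTop (𝓝 L) := by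
  have hmean : Tendsto (fun n : ℕ => (n : ℝ)⁻¹ * (v n - v 0)) atTop (𝓝 L) := by
    simpa only [Finset.sum_range_sub] using h.cesaro
  have hconst : Tendsto (fun n : ℕ => (n : ℝ)⁻¹ * v 0) atTop (𝓝 0) := by
    simpa using (tendsto_inv_atTop_zero.comp tendsto_natCast_atTop_atTop).mul_const (v 0)
  simpa [div_eq_inv_mul, mul_sub] using hmean.add hconst

section CubicRecurrence

variable {u : ℕ → ℝ}

lemma tendsto_zero_of_add_two_mul_pow_three_eq (hpos : ∀ k, 0 < u k)
    (hrec : ∀ k, u (k + 1) + 2 * u (k + 1) ^ 3 = u k) : Tendsto u atTop (𝓝 0) := by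
  have hanti : Antitone u := antitone_nat_of_succ_le fun k => by
    nlinarith [hrec k, pow_pos (hpos (k + 1)) 3]
  have hlim := tendsto_atTop_ciInf hanti ⟨0, fun _ ⟨k, hk⟩ => hk ▸ (hpos k).le⟩
  set L := ⨅ k, u k
  have hshift : Tendsto (fun k => u (k + 1)) atTop (𝓝 L) := hlim.comp (tendsto_add_atTop_nat 1)
  have hfixed : L + 2 * L ^ 3 = L := by
    refine tendsto_nhds_unique (hshift.add ((hshift.pow 3).const_mul 2)) ?_
    simpa only [hrec] using hlim
  have hL : L = 0 := pow_eq_zero_iff (n := 3) (by norm_num) |>.mp (by linarith)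
  rwa [hL] at hlim

lemma inv_sq_sub_inv_sq_of_add_two_mul_pow_three_eq {a b : ℝ} (ha : a ≠ 0)
    (hab : a + 2 * a ^ 3 = b) :
    a⁻¹ ^ 2 - b⁻¹ ^ 2 = 4 * (1 + a ^ 2) / (1 + 2 * a ^ 2) ^ 2 := by
  have hden : 1 + 2 * a ^ 2 ≠ 0 := by positivity
  subst hab
  field_simp
  ring

lemma tendsto_inv_sq_sub_of_add_two_mul_pow_three_eq (hpos : ∀ k, 0 < u k)
    (hrec : ∀ k, u (k + 1) + 2 * u (k + 1) ^ 3 = u k) :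
    Tendsto (fun k => (u (k + 1))⁻¹ ^ 2 - (u k)⁻¹ ^ 2) atTop (𝓝 4) := by
  simp only [fun k => inv_sq_sub_inv_sq_of_add_two_mul_pow_three_eq (hpos (k + 1)).ne' (hrec k)]
  have hshift := ((tendsto_zero_of_add_two_mul_pow_three_eq hpos hrec).comp
    (tendsto_add_atTop_nat 1)).pow 2
  have := ((hshift.const_add 1).const_mul 4).div
    (((hshift.const_mul 2).const_add 1).pow 2) (by norm_num)
  norm_num at this
  exact this

lemma tendsto_two_mul_sqrt_mul_of_add_two_mul_pow_three_eq (hpos : ∀ k, 0 < u k)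
    (hrec : ∀ k, u (k + 1) + 2 * u (k + 1) ^ 3 = u k) :
    Tendsto (fun k : ℕ => 2 * √k * u k) atTop (𝓝 1) := by
  have hstolz := tendsto_div_natCast_of_tendsto_sub (v := fun k => (u k)⁻¹ ^ 2)
    (tendsto_inv_sq_sub_of_add_two_mul_pow_three_eq hpos hrec)
  have hsq : Tendsto (fun k : ℕ => 4 * k * u k ^ 2) atTop (𝓝 1) := by
    refine (hstolz.inv₀ (by norm_num)).const_mul 4 |>.congr' ?_ |>.trans (by norm_num)
    filter_upwards [eventually_ne_atTop 0] with k hk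
    have := (hpos k).ne'
    field_simp
  have := (Real.continuous_sqrt.tendsto 1).comp hsq
  rw [Real.sqrt_one] at this
  refine this.congr fun k => ?_
  simp only [Function.comp_apply, Real.sqrt_mul' _ (sq_nonneg _), Real.sqrt_sq (hpos k).le,
    Real.sqrt_mul (by norm_num : (0 : ℝ) ≤ 4), show √(4 : ℝ) = 2 by
      rw [show (4 : ℝ) = 2 ^ 2 by norm_num, Real.sqrt_sq (by norm_num)]]

end CubicRecurrence

lemma exists_rpow_neg_bounds_of_tendsto_rpow_mul {f : ℕ → ℝ} {r c : ℝ} (hc : 0 < c)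
    (h : Tendsto (fun k : ℕ => (k : ℝ) ^ r * f k) atTop (𝓝 c)) :
    ∃ C₁ C₂ : ℝ, ∃ K : ℕ, 0 < C₁ ∧ C₁ ≤ C₂ ∧ ∀ k ≥ K,
      C₁ * (k : ℝ) ^ (-r) ≤ f k ∧ f k ≤ C₂ * (k : ℝ) ^ (-r) := by
  obtain ⟨K, hK⟩ := eventually_atTop.mp
    ((h.eventually (Ioo_mem_nhds (half_lt_self hc) (lt_two_mul_self hc))).and
      (eventually_gt_atTop 0))
  refine ⟨c / 2, 2 * c, K, by positivity, by linarith, fun k hk => ?_⟩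
  obtain ⟨⟨hlo, hhi⟩, hk0⟩ := hK k hk
  have hpow : 0 < (k : ℝ) ^ r := Real.rpow_pos_of_pos (by exact_mod_cast hk0) r
  have hf : f k = (k : ℝ) ^ r * f k * (k : ℝ) ^ (-r) := by
    rw [Real.rpow_neg (Nat.cast_nonneg k)]
    field_simp
  have hneg : 0 ≤ (k : ℝ) ^ (-r) := by positivity
  rw [hf]
  exact ⟨by gcongr, by gcongr⟩

theorem stmt17 (A B : Set (EuclideanSpace ℝ (Fin 3)))
    (hA : A = {p | p 0 ^ 2 + p 1 ^ 4 ≤ p 2})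
    (hB : B = {p : EuclideanSpace ℝ (Fin 3) | p 2 = 0})
    (x y : ℕ → ℝ)
    (hstep : ∀ k, ∃ w, IsMetricProj A (e3 (x k) (y k) 0) w ∧
      IsMetricProj B w (e3 (x (k + 1)) (y (k + 1)) 0))
    (hy0 : y 0 = 0) (hx0 : x 0 ≠ 0) :
    Tendsto (fun k : ℕ => 2 * (k : ℝ) ^ ((1 : ℝ) / 2) * Real.sqrt (x k ^ 2 + y k ^ 2))
      atTop (nhds 1) ∧
    ∃ C₁ C₂ : ℝ, ∃ K : ℕ, 0 < C₁ ∧ C₁ ≤ C₂ ∧ ∀ k ≥ K,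
      C₁ * (k : ℝ) ^ (-(1 : ℝ) / 2) ≤ Real.sqrt (x k ^ 2 + y k ^ 2) ∧
      Real.sqrt (x k ^ 2 + y k ^ 2) ≤ C₂ * (k : ℝ) ^ (-(1 : ℝ) / 2) := by
  subst hA hB
  have hiter : ∀ k, y k = 0 → y (k + 1) = 0 ∧ x (k + 1) + 2 * x (k + 1) ^ 3 = x k := by
    intro k hyk
    obtain ⟨w, hwA, hwB⟩ := hstep k
    rw [hyk] at hwA
    obtain ⟨hw1, hw0⟩ := hwA.apply_eq_of_paraboloid
    obtain ⟨hx, hy⟩ := hwB.apply_eq_of_plane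
    simp only [e3_apply_zero, e3_apply_one] at hx hy
    exact ⟨hy.trans hw1, hx ▸ hw0⟩
  have hy : ∀ k, y k = 0 := Nat.rec hy0 fun k hk => (hiter k hk).1
  have hrec : ∀ k, x (k + 1) + 2 * x (k + 1) ^ 3 = x k := fun k => (hiter k (hy k)).2
  have hx : ∀ k, x k ≠ 0 := Nat.rec hx0 fun k hk hk1 => hk (by rw [← hrec k, hk1]; ring)
  have hnorm : ∀ k, √(x k ^ 2 + y k ^ 2) = |x k| := fun k => by
    rw [hy k, zero_pow two_ne_zero, add_zero, Real.sqrt_sq_eq_abs]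
  have hlim : Tendsto (fun k : ℕ => 2 * (k : ℝ) ^ ((1 : ℝ) / 2) * √(x k ^ 2 + y k ^ 2))
      atTop (𝓝 1) := by
    simpa only [hnorm, Real.sqrt_eq_rpow] using
      tendsto_two_mul_sqrt_mul_of_add_two_mul_pow_three_eq (fun k => abs_pos.2 (hx k))
        fun k => by rw [← abs_add_two_mul_pow_three, hrec]
  have hhalf : Tendsto (fun k : ℕ => (k : ℝ) ^ ((1 : ℝ) / 2) * √(x k ^ 2 + y k ^ 2))
      atTop (𝓝 (1 / 2)) := by
    convert hlim.const_mul (1 / 2) using 2 <;> ring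
  refine ⟨hlim, ?_⟩
  simpa only [neg_div] using exists_rpow_neg_bounds_of_tendsto_rpow_mul one_half_pos hhalf
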